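/- Let Q be a finite set with |Q| = n ≥ 2, let a, b, c : Q → Q with b and c bijective, and let C > 0 be a real constant. Suppose: (i) a has at most 2·√(n · log n) cyclic points and the height of a is at most 2·√(n · log n); (ii) for every two ordered pairs (S₁, S₂) and (T₁, T₂) of distinct states of Q, there is a word over the letters b, c of length at most C · log n whose action maps S₁ to T₁ and S₂ to T₂; (iii) a is not injective. Then the automaton on state set Q with alphabet {a, b, c} is synchronizing, and its reset threshold is at most 2·√(n · log n) + (2·√(n · log n) − 1)·(C · log n + 1). -/

import Mathlib

/-- The action of a word (a list of letters, each acting as a function on the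
state set), applied in order: the first letter of the list acts first. -/
def wordAction {Q : Type*} (w : List (Q → Q)) (q : Q) : Q :=
  w.foldl (fun s f => f s) q

/-- A word is synchronizing if its action sends every state to one common state. -/
def IsSyncWord {Q : Type*} (w : List (Q → Q)) : Prop :=
  ∃ S : Q, ∀ T : Q, wordAction w T = S

/-- A state `s` is a cyclic point of `f` if some positive iterate of `f` fixes `s`. -/
def IsCyclicPt {Q : Type*} (f : Q → Q) (s : Q) : Prop :=
  ∃ i : ℕ, 0 < i ∧ f^[i] s = s

/-- The height of a state `T` under `f`: the smallest `i ≥ 0` such that `f^[i] T`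
is a cyclic point of `f`. -/
noncomputable def stateHeight {Q : Type*} (f : Q → Q) (T : Q) : ℕ :=
  sInf {i : ℕ | IsCyclicPt f (f^[i] T)}

/-- The height of `f`: the maximum of the heights of all states. -/
noncomputable def funcHeight {Q : Type*} [Fintype Q] (f : Q → Q) : ℕ :=
  Finset.univ.sup (stateHeight f)

/-- The reset threshold of the automaton on `Q` whose letters act by the functions
in the set `L`: the length of its shortest synchronizing word over `L`. -/
noncomputable def resetThreshold {Q : Type*} (L : Set (Q → Q)) : ℕ :=
  sInf {k : ℕ | ∃ w : List (Q → Q), (∀ f ∈ w, f ∈ L) ∧ w.length = k ∧ IsSyncWord w}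


/-!
After `funcHeight a` letters `a`, every state lies on a cycle of `a`, so the image of the
automaton has at most `2√(n log n)` states. Since `a` merges some pair `T₁ ≠ T₂`, and any
pair of distinct states can be steered onto `(T₁, T₂)` by a word over `b, c` of length at most
`C log n`, each round of at most `C log n + 1` letters reduces the size of the image by one.
-/

open Function

section WordAction

variable {Q : Type*}

theorem wordAction_append (w₁ w₂ : List (Q → Q)) (q : Q) :
    wordAction (w₁ ++ w₂) q = wordAction w₂ (wordAction w₁ q) :=
  List.foldl_append

theorem wordAction_replicate (f : Q → Q) (m : ℕ) (q : Q) :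
    wordAction (List.replicate m f) q = f^[m] q := by
  induction m generalizing q with
  | zero => rfl
  | succ m ih => exact ih (f q)

theorem resetThreshold_le_length {L : Set (Q → Q)} {w : List (Q → Q)} (hw : ∀ f ∈ w, f ∈ L)
    (hsync : IsSyncWord w) : resetThreshold L ≤ w.length :=
  Nat.sInf_le ⟨w, hw, rfl, hsync⟩

theorem isSyncWord_replicate_append {f : Q → Q} {m : ℕ} {w : List (Q → Q)} {s : Q}
    (hs : ∀ q, wordAction w (f^[m] q) = s) : IsSyncWord (List.replicate m f ++ w) :=
  ⟨s, fun q => by rw [wordAction_append, wordAction_replicate, hs]⟩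

end WordAction

section Height

variable {Q : Type*} {f : Q → Q}

theorem IsCyclicPt.iterate {s : Q} (hs : IsCyclicPt f s) (m : ℕ) : IsCyclicPt f (f^[m] s) :=
  let ⟨i, hi, hfix⟩ := hs
  ⟨i, hi, IsPeriodicPt.apply_iterate hfix m⟩

theorem exists_isCyclicPt_iterate [Finite Q] (f : Q → Q) (q : Q) :
    ∃ i, IsCyclicPt f (f^[i] q) := by
  obtain ⟨i, j, hij, heq⟩ := Finite.exists_ne_map_eq_of_infinite fun m : ℕ => f^[m] q
  wlog hlt : i < j generalizing i j
  · exact this j i hij.symm heq.symm (by omega)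
  refine ⟨i, j - i, by omega, ?_⟩
  rw [← iterate_add_apply, Nat.sub_add_cancel hlt.le]
  exact heq.symm

theorem isCyclicPt_iterate_of_stateHeight_le [Finite Q] {q : Q} {m : ℕ}
    (hm : stateHeight f q ≤ m) : IsCyclicPt f (f^[m] q) := by
  have hcyc : IsCyclicPt f (f^[stateHeight f q] q) := Nat.sInf_mem (exists_isCyclicPt_iterate f q)
  rw [← Nat.sub_add_cancel hm, iterate_add_apply]
  exact hcyc.iterate _

theorem isCyclicPt_iterate_funcHeight [Fintype Q] (f : Q → Q) (q : Q) :
    IsCyclicPt f (f^[funcHeight f] q) :=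
  isCyclicPt_iterate_of_stateHeight_le (Finset.le_sup (Finset.mem_univ q))

theorem card_image_iterate_funcHeight_le [Fintype Q] [DecidableEq Q] (f : Q → Q) :
    (Finset.univ.image f^[funcHeight f]).card ≤ {s | IsCyclicPt f s}.ncard := by
  rw [← Set.ncard_coe_finset]
  refine Set.ncard_le_ncard ?_ (Set.toFinite _)
  simpa [Set.subset_def] using isCyclicPt_iterate_funcHeight f

end Height

section Collapse

variable {Q : Type*} {A : Set (Q → Q)}

theorem exists_word_merging_pair {a : Q → Q} {L : ℝ} (haA : a ∈ A) (ha : ¬Injective a)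
    (hpairs : ∀ S₁ S₂ T₁ T₂ : Q, S₁ ≠ S₂ → T₁ ≠ T₂ →
      ∃ w : List (Q → Q), (∀ f ∈ w, f ∈ A) ∧ (w.length : ℝ) ≤ L ∧
        wordAction w S₁ = T₁ ∧ wordAction w S₂ = T₂)
    {s₁ s₂ : Q} (hs : s₁ ≠ s₂) :
    ∃ w : List (Q → Q), (∀ f ∈ w, f ∈ A) ∧ (w.length : ℝ) ≤ L + 1 ∧
      wordAction w s₁ = wordAction w s₂ := by
  obtain ⟨t₁, t₂, hat, ht⟩ := not_injective_iff.mp ha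
  obtain ⟨w, hwA, hwlen, hw₁, hw₂⟩ := hpairs s₁ s₂ t₁ t₂ hs ht
  refine ⟨w ++ [a], ?_, ?_, ?_⟩
  · simpa [or_imp, forall_and] using ⟨hwA, haA⟩
  · simpa using hwlen
  · rw [wordAction_append, wordAction_append, hw₁, hw₂]
    exact hat

theorem exists_word_collapsing_finset {M : ℝ}
    (hmerge : ∀ s₁ s₂ : Q, s₁ ≠ s₂ → ∃ w : List (Q → Q), (∀ f ∈ w, f ∈ A) ∧
      (w.length : ℝ) ≤ M ∧ wordAction w s₁ = wordAction w s₂)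
    (S : Finset Q) (hS : S.Nonempty) :
    ∃ w : List (Q → Q), (∀ f ∈ w, f ∈ A) ∧ (w.length : ℝ) ≤ (S.card - 1) * M ∧
      ∃ s, ∀ q ∈ S, wordAction w q = s := by
  classical
  induction hk : S.card using Nat.strong_induction_on generalizing S with
  | _ k ih =>
  subst hk
  obtain ⟨s, rfl⟩ | hnontriv := hS.exists_eq_singleton_or_nontrivial
  · exact ⟨[], by simp, by simp, s, by simp [wordAction]⟩
  obtain ⟨s₁, hs₁, s₂, hs₂, hne⟩ := hnontriv
  obtain ⟨w₀, hw₀A, hw₀len, hw₀⟩ := hmerge s₁ s₂ hne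
  set S' := S.image (wordAction w₀)
  have hS' : S'.card + 1 ≤ S.card := Nat.lt_of_le_of_ne Finset.card_image_le
    fun h => hne (Finset.card_image_iff.mp h hs₁ hs₂ hw₀)
  obtain ⟨w₁, hw₁A, hw₁len, s, hs⟩ := ih S'.card (by omega) S' (hS.image _) rfl
  refine ⟨w₀ ++ w₁, ?_, ?_, s, fun q hq => ?_⟩
  · simpa [or_imp, forall_and] using ⟨hw₀A, hw₁A⟩
  · have hM : 0 ≤ M := (Nat.cast_nonneg _).trans hw₀len
    have hcard : (S'.card : ℝ) + 1 ≤ S.card := by exact_mod_cast hS'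
    rw [List.length_append, Nat.cast_add]
    nlinarith
  · rw [wordAction_append]
    exact hs _ (Finset.mem_image_of_mem _ hq)

end Collapse

theorem reset_threshold_bound_general
    (Q : Type*) [Fintype Q] (n : ℕ) (hcard : Nat.card Q = n) (hn : 2 ≤ n)
    (a b c : Q → Q)
    (C : ℝ) (hC : 0 < C)
    (hcyc : ({s : Q | IsCyclicPt a s}.ncard : ℝ) ≤ 2 * Real.sqrt (n * Real.log n))
    (hheight : (funcHeight a : ℝ) ≤ 2 * Real.sqrt (n * Real.log n))
    (hpairs : ∀ S₁ S₂ T₁ T₂ : Q, S₁ ≠ S₂ → T₁ ≠ T₂ →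
      ∃ w : List (Q → Q), (∀ f ∈ w, f = b ∨ f = c) ∧
        (w.length : ℝ) ≤ C * Real.log n ∧
        wordAction w S₁ = T₁ ∧ wordAction w S₂ = T₂)
    (ha : ¬ Function.Injective a) :
    (∃ w : List (Q → Q), (∀ f ∈ w, f = a ∨ f = b ∨ f = c) ∧ IsSyncWord w) ∧
      (resetThreshold {f : Q → Q | f = a ∨ f = b ∨ f = c} : ℝ) ≤
        2 * Real.sqrt (n * Real.log n) +
          (2 * Real.sqrt (n * Real.log n) - 1) * (C * Real.log n + 1) := by
  classical
  have : Nonempty Q := (Nat.card_pos_iff.mp (by omega)).1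
  set A : Set (Q → Q) := {f | f = a ∨ f = b ∨ f = c}
  have hpairsA := fun S₁ S₂ T₁ T₂ h₁ h₂ => (hpairs S₁ S₂ T₁ T₂ h₁ h₂).imp
    fun _ => And.imp_left fun hw f hf => (Or.inr (hw f hf) : f ∈ A)
  set S := Finset.univ.image a^[funcHeight a]
  obtain ⟨w, hwA, hwlen, s, hs⟩ := exists_word_collapsing_finset
    (fun _ _ => exists_word_merging_pair (A := A) (Or.inl rfl) ha hpairsA) S
    (Finset.univ_nonempty.image _)
  set u := List.replicate (funcHeight a) a ++ w
  have huA : ∀ f ∈ u, f ∈ A := by simpa [u, or_imp, forall_and, A] using hwA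
  have hsync : IsSyncWord u :=
    isSyncWord_replicate_append fun q => hs _ (Finset.mem_image_of_mem _ (Finset.mem_univ q))
  refine ⟨⟨u, huA, hsync⟩, (Nat.cast_le.mpr (resetThreshold_le_length huA hsync)).trans ?_⟩
  have hS : (S.card : ℝ) ≤ 2 * Real.sqrt (n * Real.log n) :=
    (Nat.cast_le.mpr (card_image_iterate_funcHeight_le a)).trans hcyc
  have hL : 0 ≤ C * Real.log n :=
    mul_nonneg hC.le (Real.log_nonneg (by exact_mod_cast (by omega : 1 ≤ n)))
  simp only [u, List.length_append, List.length_replicate, Nat.cast_add]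
  nlinarith

/-- Let `Q` be a finite set with `|Q| = n ≥ 2`, let `a, b, c : Q → Q` with `b, c`
bijective, and let `C > 0`. Assume (i) `a` has at most `2√(n log n)` cyclic points
and height at most `2√(n log n)`; (ii) every ordered pair of distinct states can be
mapped to any other ordered pair of distinct states by a word over `b, c` of length
at most `C * log n`; (iii) `a` is not injective. Then the automaton with alphabet
`{a, b, c}` is synchronizing and its reset threshold is at most
`2√(n log n) + (2√(n log n) − 1) * (C log n + 1)`. -/
theorem reset_threshold_bound
    (Q : Type*) [Fintype Q] (n : ℕ) (hcard : Nat.card Q = n) (hn : 2 ≤ n)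
    (a b c : Q → Q) (hb : Function.Bijective b) (hc : Function.Bijective c)
    (C : ℝ) (hC : 0 < C)
    (hcyc : ({s : Q | IsCyclicPt a s}.ncard : ℝ) ≤ 2 * Real.sqrt (n * Real.log n))
    (hheight : (funcHeight a : ℝ) ≤ 2 * Real.sqrt (n * Real.log n))
    (hpairs : ∀ S₁ S₂ T₁ T₂ : Q, S₁ ≠ S₂ → T₁ ≠ T₂ →
      ∃ w : List (Q → Q), (∀ f ∈ w, f = b ∨ f = c) ∧
        (w.length : ℝ) ≤ C * Real.log n ∧
        wordAction w S₁ = T₁ ∧ wordAction w S₂ = T₂)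
    (ha : ¬ Function.Injective a) :
    (∃ w : List (Q → Q), (∀ f ∈ w, f = a ∨ f = b ∨ f = c) ∧ IsSyncWord w) ∧
      (resetThreshold {f : Q → Q | f = a ∨ f = b ∨ f = c} : ℝ) ≤
        2 * Real.sqrt (n * Real.log n) +
          (2 * Real.sqrt (n * Real.log n) - 1) * (C * Real.log n + 1) :=
  reset_threshold_bound_general Q n hcard hn a b c C hC hcyc hheight hpairs ha
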